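/- Let (K,ν) be a valued field, {a_ρ}_{ρ<λ} a pseudo-convergent sequence of algebraic type in K without a limit in K, q(x) a polynomial of smallest degree for which the values ν(q(a_ρ)) are eventually strictly increasing, and z a root of q(x). Then there exists an immediate algebraic extension of ν to K(z) defined as follows: for every polynomial f(x) ∈ K[x] with deg f < deg q, ν(f(z)) is set to be the eventually constant value ν(f(a_ρ)) for large ρ. Moreover, if u is a root of q(x) and μ is an extension of ν to K(u) making u a limit of {a_ρ}_{ρ<λ}, then there exists a value-preserving K-isomorphism from K(u) to K(z) taking u to z. -/

import Mathlib

open Polynomial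

/-- A valuation on a commutative ring `R` with values in `Γ ∪ {∞}`. -/
def IsVal {R : Type*} [CommRing R] {Γ : Type*} [AddCommGroup Γ] [LinearOrder Γ] [IsOrderedAddMonoid Γ]
    (v : R → WithTop Γ) : Prop :=
  (∀ a b, v (a * b) = v a + v b) ∧
  (∀ a b, min (v a) (v b) ≤ v (a + b)) ∧
  v 1 = 0 ∧ v 0 = ⊤

/-- The `i`-th coefficient of the `q`-expansion of `f`. -/
noncomputable def qCoeff {K : Type*} [Field K] (q f : K[X]) (i : ℕ) : K[X] :=
  (f /ₘ q ^ i) %ₘ q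

/-- The `q`-truncation `ν_q` of a valuation `ν` on `K[x]`. -/
noncomputable def trunc {K : Type*} [Field K] {Γ : Type*} [AddCommGroup Γ] [LinearOrder Γ] [IsOrderedAddMonoid Γ]
    (v : K[X] → WithTop Γ) (q : K[X]) (f : K[X]) : WithTop Γ :=
  (Finset.range (f.natDegree + 1)).inf fun i => v (qCoeff q f i * q ^ i)

/-- The quantity `(ν(f) - ν(∂_b f))/b`, an element of `Γ ∪ {±∞}`. -/
noncomputable def epsAt {K : Type*} [Field K] {Γ : Type*} [AddCommGroup Γ] [LinearOrder Γ] [IsOrderedAddMonoid Γ]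
    [Module ℚ Γ] (v : K[X] → WithTop Γ) (f : K[X]) (b : ℕ) : WithBot (WithTop Γ) :=
  if h : v (hasseDeriv b f) = ⊤ then ⊥
  else (((v f).map fun c => (b : ℚ)⁻¹ • (c - (v (hasseDeriv b f)).untop h) : WithTop Γ) :
    WithBot (WithTop Γ))

/-- `ε(f) = max_b (ν(f) - ν(∂_b f))/b` over positive integers `b`. -/
noncomputable def eps {K : Type*} [Field K] {Γ : Type*} [AddCommGroup Γ] [LinearOrder Γ] [IsOrderedAddMonoid Γ]
    [Module ℚ Γ] (v : K[X] → WithTop Γ) (f : K[X]) : WithBot (WithTop Γ) :=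
  (Finset.Icc 1 f.natDegree).sup (epsAt v f)

/-- A (Spivakovsky) key polynomial for `ν`. -/
def IsKeyPoly {K : Type*} [Field K] {Γ : Type*} [AddCommGroup Γ] [LinearOrder Γ] [IsOrderedAddMonoid Γ]
    [Module ℚ Γ] (v : K[X] → WithTop Γ) (Q : K[X]) : Prop :=
  Q.Monic ∧ ∀ f : K[X], eps v Q ≤ eps v f → Q.degree ≤ f.degree

/-- `f` and `g` have the same initial form in the graded algebra of `ν`. -/
def EquivIn {K : Type*} [Field K] {Γ : Type*} [AddCommGroup Γ] [LinearOrder Γ] [IsOrderedAddMonoid Γ]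
    (v : K[X] → WithTop Γ) (f g : K[X]) : Prop :=
  v f = v g ∧ (v f < v (f - g) ∨ v f = ⊤)

/-- `g` ν-divides `f`. -/
def DvdIn {K : Type*} [Field K] {Γ : Type*} [AddCommGroup Γ] [LinearOrder Γ] [IsOrderedAddMonoid Γ]
    (v : K[X] → WithTop Γ) (g f : K[X]) : Prop :=
  ∃ h : K[X], EquivIn v f (g * h)

/-- A MacLane–Vaquié key polynomial for `ν`. -/
def IsMVKeyPoly {K : Type*} [Field K] {Γ : Type*} [AddCommGroup Γ] [LinearOrder Γ] [IsOrderedAddMonoid Γ]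
    (v : K[X] → WithTop Γ) (φ : K[X]) : Prop :=
  φ.Monic ∧
  (∀ f g : K[X], DvdIn v φ (f * g) → DvdIn v φ f ∨ DvdIn v φ g) ∧
  (∀ f : K[X], DvdIn v φ f → φ.degree ≤ f.degree)

/-- `α(Q)`: the minimal degree of a polynomial on which `ν_Q` differs from `ν`. -/
noncomputable def alphaDeg {K : Type*} [Field K] {Γ : Type*} [AddCommGroup Γ] [LinearOrder Γ] [IsOrderedAddMonoid Γ]
    (v : K[X] → WithTop Γ) (Q : K[X]) : ℕ :=
  sInf {d | ∃ f : K[X], f.natDegree = d ∧ trunc v Q f < v f}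

/-- `Ψ(Q)`: monic polynomials of degree `α(Q)` with `ν_Q(f) < ν(f)`. -/
def Psi {K : Type*} [Field K] {Γ : Type*} [AddCommGroup Γ] [LinearOrder Γ] [IsOrderedAddMonoid Γ]
    (v : K[X] → WithTop Γ) (Q : K[X]) : Set K[X] :=
  {f | f.Monic ∧ trunc v Q f < v f ∧ f.natDegree = alphaDeg v Q}


/-!
Fix `f` with `deg f < deg q`. Its Hasse derivatives have smaller degree, so by induction on the
degree the values `v (∂ᵢf (a ρ))` are eventually constant. As the gauge `γ ρ = v (a σ - a ρ)`
(`σ > ρ`) is strictly increasing, the values `v (∂ᵢf (a ρ)) + i γ ρ` of the terms of the Taylor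
expansion of `f` at `a ρ` eventually have a unique minimum `δ ρ`, which is strictly increasing in
`ρ`; hence `v (f b - f (a ρ)) = δ ρ` for every `b` with `v (b - a ρ) = γ ρ`. By minimality of
`deg q`, `v (f (a ρ))` is not eventually equal to `δ ρ`, so `v (f (a ρ)) < δ ρ` for some `ρ`, and
then `v (f b) = v (f (a ρ))` for all such `b`: both for `b = a σ`, `σ > ρ`, and for a limit `b`.

So `v (f (a ρ))` is eventually constant, `q` is irreducible, and the eventual value is a
well-defined `w (f z)`. It is multiplicative because `f f' = r + q t` with `deg r, deg t < deg q`,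
where `v (q t)` is eventually strictly increasing while `v (f f')` and `v r` are eventually
constant.
-/

open Filter

def IsVal.toAddValuation {R : Type*} [CommRing R] {Γ : Type*} [AddCommGroup Γ] [LinearOrder Γ]
    [IsOrderedAddMonoid Γ] {v : R → WithTop Γ} (hv : IsVal v) : AddValuation R (WithTop Γ) :=
  AddValuation.of v hv.2.2.2 hv.2.2.1 hv.2.1 hv.1

section EventualOrder

variable {X : Type*} [LinearOrder X]

def EventuallyStrictMono {β : Type*} [Preorder β] (u : X → β) : Prop :=
  ∃ x₀, ∀ x y, x₀ ≤ x → x < y → u x < u y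

theorem EventuallyStrictMono.add_eventually_eq {Γ : Type*} [AddCommGroup Γ] [LinearOrder Γ]
    [IsOrderedAddMonoid Γ] {u u' : X → WithTop Γ} (hu : EventuallyStrictMono u) {c : WithTop Γ}
    (hc : c ≠ ⊤) (hu' : ∀ᶠ x in atTop, u' x = c) :
    EventuallyStrictMono fun x => u x + u' x := by
  obtain ⟨x₀, hx₀⟩ := hu
  have : Nonempty X := ⟨x₀⟩
  obtain ⟨x₁, hx₁⟩ := eventually_atTop.1 hu'
  refine ⟨max x₀ x₁, fun x y hx hxy => ?_⟩
  simp only [hx₁ x (le_of_max_le_right hx), hx₁ y (le_of_max_le_right hx |>.trans hxy.le)]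
  exact WithTop.add_lt_add_right hc (hx₀ x y (le_of_max_le_left hx) hxy)

variable [NoMaxOrder X]

theorem EventuallyStrictMono.not_eventually_eq {β : Type*} [Preorder β] {u : X → β}
    (hu : EventuallyStrictMono u) (c : β) : ¬∀ᶠ x in atTop, u x = c := by
  intro hc
  obtain ⟨x₀, hx₀⟩ := hu
  have : Nonempty X := ⟨x₀⟩
  obtain ⟨x₁, hx₁⟩ := eventually_atTop.1 hc
  obtain ⟨y, hy⟩ := exists_gt (max x₀ x₁)
  have hlt := hx₀ _ y (le_max_left _ _) hy
  rw [hx₁ _ (le_max_right _ _), hx₁ y (le_max_right _ _ |>.trans hy.le)] at hlt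
  exact lt_irrefl c hlt

theorem StrictMono.eventually_lt_or_eventually_gt {β : Type*} [LinearOrder β] {f : X → β}
    (hf : StrictMono f) (c : β) : (∀ᶠ x in atTop, f x < c) ∨ ∀ᶠ x in atTop, c < f x := by
  by_cases h : ∃ x₀, c ≤ f x₀
  · obtain ⟨x₀, hx₀⟩ := h
    exact .inr <| (eventually_gt_atTop x₀).mono fun x hx => hx₀.trans_lt (hf hx)
  · simp only [not_exists, not_le] at h
    exact .inl <| .of_forall h

end EventualOrder

theorem Finset.exists_eventually_forall_lt {α X β : Type*} [LinearOrder β] {l : Filter X}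
    (F : α → X → β) {s : Finset α} (hs : s.Nonempty)
    (h : ∀ i ∈ s, ∀ j ∈ s, i ≠ j →
      (∀ᶠ x in l, F i x < F j x) ∨ ∀ᶠ x in l, F j x < F i x) :
    ∃ i ∈ s, ∀ᶠ x in l, ∀ j ∈ s, j ≠ i → F i x < F j x := by
  classical
  induction hs using Finset.Nonempty.cons_induction with
  | singleton a =>
    exact ⟨a, mem_singleton_self a, .of_forall fun _ j hj hja => (hja (mem_singleton.1 hj)).elim⟩
  | cons a s ha hs ih =>
    obtain ⟨i, hi, hev⟩ := ih fun i hi j hj => h i (mem_cons_of_mem hi) j (mem_cons_of_mem hj)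
    have hai : a ≠ i := fun hai => ha (hai ▸ hi)
    rcases h a (mem_cons_self a s) i (mem_cons_of_mem hi) hai with hlt | hgt
    · refine ⟨a, mem_cons_self a s, (hlt.and hev).mono fun x hx j hj hja => ?_⟩
      rcases mem_cons.1 hj with rfl | hj
      · exact absurd rfl hja
      · rcases eq_or_ne j i with rfl | hji
        · exact hx.1
        · exact hx.1.trans (hx.2 j hj hji)
    · refine ⟨i, mem_cons_of_mem hi, (hgt.and hev).mono fun x hx j hj hji => ?_⟩
      rcases mem_cons.1 hj with rfl | hj
      · exact hx.1
      · exact hx.2 j hj hji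

section Lines

variable {X : Type*} [LinearOrder X] [NoMaxOrder X] {Γ : Type*} [AddCommGroup Γ] [LinearOrder Γ]
  [IsOrderedAddMonoid Γ] {γ : X → Γ}

theorem eventually_add_nsmul_lt_or_gt (hγ : StrictMono γ) (b b' : Γ) {m n : ℕ} (hmn : m < n) :
    (∀ᶠ x in atTop, b + m • γ x < b' + n • γ x) ∨
      ∀ᶠ x in atTop, b' + n • γ x < b + m • γ x := by
  have hD : StrictMono fun x => (b' + n • γ x) - (b + m • γ x) := by
    intro x y hxy
    have h := nsmul_lt_nsmul_left (sub_pos.2 (hγ hxy)) hmn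
    refine sub_pos.1 ?_
    convert sub_pos.2 h using 1
    simp only [nsmul_sub]
    abel
  exact (hD.eventually_lt_or_eventually_gt 0).symm.imp (fun h => h.mono fun _ => sub_pos.1)
    (fun h => h.mono fun _ => sub_neg.1)

theorem exists_eventually_forall_add_nsmul_lt (hγ : StrictMono γ) (β : ℕ → WithTop Γ)
    {s : Finset ℕ} {d : ℕ} (hd : d ∈ s) (hβd : β d ≠ ⊤) :
    ∃ i ∈ s, β i ≠ ⊤ ∧ ∀ᶠ x in atTop, ∀ j ∈ s, j ≠ i →
      β i + ↑(i • γ x) < β j + ↑(j • γ x) := by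
  classical
  set S := s.filter fun i => β i ≠ ⊤
  have hcmp : ∀ i ∈ S, ∀ j ∈ S, i ≠ j →
      (∀ᶠ x in atTop, β i + ↑(i • γ x) < β j + ↑(j • γ x)) ∨
        ∀ᶠ x in atTop, β j + ↑(j • γ x) < β i + ↑(i • γ x) := by
    intro i hi j hj hij
    obtain ⟨bi, hbi⟩ := WithTop.ne_top_iff_exists.1 (Finset.mem_filter.1 hi).2
    obtain ⟨bj, hbj⟩ := WithTop.ne_top_iff_exists.1 (Finset.mem_filter.1 hj).2
    simp only [← hbi, ← hbj, ← WithTop.coe_add, WithTop.coe_lt_coe]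
    rcases hij.lt_or_gt with h | h
    · exact eventually_add_nsmul_lt_or_gt hγ bi bj h
    · exact (eventually_add_nsmul_lt_or_gt hγ bj bi h).symm
  obtain ⟨i, hiS, hev⟩ := S.exists_eventually_forall_lt (fun i x => β i + ↑(i • γ x))
    ⟨d, Finset.mem_filter.2 ⟨hd, hβd⟩⟩ hcmp
  obtain ⟨hi, hβi⟩ := Finset.mem_filter.1 hiS
  refine ⟨i, hi, hβi, hev.mono fun x hx j hj hji => ?_⟩
  by_cases hβj : β j = ⊤
  · rw [hβj, top_add]
    exact WithTop.lt_top_iff_ne_top.2 (WithTop.add_ne_top.2 ⟨hβi, WithTop.coe_ne_top⟩)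
  · exact hx j (Finset.mem_filter.2 ⟨hj, hβj⟩) hji

end Lines

section Valued

variable {R Γ₀ : Type*} [Ring R] [LinearOrderedAddCommMonoidWithTop Γ₀]
  (w : AddValuation R Γ₀)

theorem AddValuation.map_sum_eq_of_lt {α : Type*} [DecidableEq α] {s : Finset α} {f : α → R}
    {j : α} (hj : j ∈ s) (hf : ∀ i ∈ s \ {j}, w (f j) < w (f i)) :
    w (∑ i ∈ s, f i) = w (f j) :=
  Valuation.map_sum_eq_of_lt w hj hf

variable {X : Type*} [LinearOrder X] [NoMaxOrder X]

theorem AddValuation.eq_of_eventuallyStrictMono_sub {x y : X → R} {c c' : Γ₀}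
    (hx : ∀ᶠ σ in atTop, w (x σ) = c) (hy : ∀ᶠ σ in atTop, w (y σ) = c')
    (hxy : EventuallyStrictMono fun σ => w (x σ - y σ)) : c = c' := by
  by_contra hne
  refine hxy.not_eventually_eq (min c c') ((hx.and hy).mono fun σ h => ?_)
  rw [sub_eq_add_neg, w.map_add_of_distinct_val (by rwa [w.map_neg, h.1, h.2]), w.map_neg, h.1,
    h.2]

theorem AddValuation.frequently_lt_of_not_eventuallyStrictMono [Nonempty X] {x : X → R}
    {F : X → Γ₀} (hF : StrictMono F)
    (hx : ∀ᶠ ρ in atTop, ∀ σ, ρ < σ → w (x σ - x ρ) = F ρ)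
    (hns : ¬EventuallyStrictMono fun ρ => w (x ρ)) : ∃ᶠ ρ in atTop, w (x ρ) < F ρ := by
  by_contra hfreq
  rw [not_frequently] at hfreq
  obtain ⟨ρ₀, h₀⟩ := eventually_atTop.1 (hx.and hfreq)
  have heq : ∀ ρ, ρ₀ ≤ ρ → w (x ρ) = F ρ := by
    intro ρ hρ
    obtain ⟨hdiff, hge⟩ := h₀ ρ hρ
    refine le_antisymm (not_lt.1 fun hgt => ?_) (not_lt.1 hge)
    obtain ⟨σ, hσ⟩ := exists_gt ρ
    have hσval : w (x σ) = F ρ := by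
      rw [← sub_add_cancel (x σ) (x ρ), w.map_add_eq_of_lt_left (by rwa [hdiff σ hσ]),
        hdiff σ hσ]
    exact (h₀ σ (hρ.trans hσ.le)).2 (by rw [hσval]; exact hF hσ)
  exact hns ⟨ρ₀, fun ρ σ hρ hρσ =>
    (heq ρ hρ).trans_lt ((hF hρσ).trans_eq (heq σ (hρ.trans hρσ.le)).symm)⟩

end Valued

namespace Polynomial

theorem natDegree_hasseDeriv_lt {R : Type*} [Semiring R] {f : R[X]} (hf : 0 < f.natDegree)
    {i : ℕ} (hi : 1 ≤ i) : (hasseDeriv i f).natDegree < f.natDegree :=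
  (natDegree_hasseDeriv_le f i).trans_lt (by omega)

theorem degree_hasseDeriv_lt {R : Type*} [Semiring R] {f : R[X]} (hf : 0 < f.natDegree)
    {i : ℕ} (hi : 1 ≤ i) : (hasseDeriv i f).degree < f.degree :=
  degree_lt_degree (natDegree_hasseDeriv_lt hf hi)

theorem aeval_sub_algebraMap_eval_eq_sum {R A : Type*} [CommRing R] [CommRing A] [Algebra R A]
    (f : R[X]) (b : A) (c : R) :
    aeval b f - algebraMap R A (f.eval c) = ∑ i ∈ Finset.Icc 1 f.natDegree,
      (hasseDeriv i f).eval c • (b - algebraMap R A c) ^ i := by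
  have htaylor : aeval b f = aeval (b - algebraMap R A c) (taylor c f) := by
    rw [taylor_apply, aeval_comp]
    simp
  rw [htaylor, aeval_eq_sum_range' (n := f.natDegree + 1) (by rw [natDegree_taylor]; omega),
    Finset.range_eq_Ico, Finset.sum_eq_sum_Ico_succ_bot (by omega), zero_add,
    Finset.Ico_add_one_right_eq_Icc, taylor_coeff_zero, pow_zero, Algebra.smul_def, mul_one,
    add_sub_cancel_left]
  simp only [taylor_coeff]

theorem degree_mul_div_lt {K : Type*} [Field K] {f f' q : K[X]} (hf : f.degree < q.degree)
    (hf' : f'.degree < q.degree) : (f * f' / q).degree < q.degree := by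
  have hq0 : q ≠ 0 := ne_zero_of_degree_gt hf
  rcases eq_or_ne (f * f' / q) 0 with ht | ht
  · rw [ht, degree_zero]
    exact bot_lt_of_lt hf
  have hff' : f * f' ≠ 0 := by
    rintro h
    rw [h, EuclideanDomain.zero_div] at ht
    exact ht rfl
  have hnat : ∀ g : K[X], g ≠ 0 → g.degree < q.degree → g.natDegree < q.natDegree :=
    fun g hg => natDegree_lt_natDegree hg
  have hf := hnat f (left_ne_zero_of_mul hff') hf
  have hf' := hnat f' (right_ne_zero_of_mul hff') hf'
  have hr := natDegree_le_natDegree (degree_mod_lt (f * f') hq0).le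
  have hqt : q * (f * f' / q) = f * f' - f * f' % q := by
    rw [eq_sub_iff_add_eq', EuclideanDomain.mod_add_div]
  have hdeg := natDegree_sub_le (f * f') (f * f' % q)
  rw [← hqt, natDegree_mul hq0 ht] at hdeg
  have := natDegree_mul_le (p := f) (q := f')
  refine degree_lt_degree ?_
  omega

theorem aeval_mod_of_aeval_eq_zero {K A : Type*} [Field K] [CommRing A] [Algebra K A]
    {q : K[X]} {x : A} (hx : aeval x q = 0) (f : K[X]) : aeval x (f % q) = aeval x f := by
  conv_rhs => rw [← EuclideanDomain.mod_add_div f q]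
  rw [map_add, map_mul, hx, zero_mul, add_zero]

end Polynomial

section Taylor

variable {K : Type*} [Field K] {Γ : Type*} [AddCommGroup Γ] [LinearOrder Γ]
  [IsOrderedAddMonoid Γ]

/-- The value of the term `∂ᵢf(c) (x - c)ⁱ` of the Taylor expansion of `f` at `c` when `x - c`
has value `g`. -/
noncomputable def taylorTermVal (v : AddValuation K (WithTop Γ)) (f : K[X]) (c : K) (g : Γ)
    (i : ℕ) : WithTop Γ :=
  v ((hasseDeriv i f).eval c) + ↑(i • g)

def IsDominantTaylorTerm (v : AddValuation K (WithTop Γ)) (f : K[X]) (c : K) (g : Γ) (i : ℕ) :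
    Prop :=
  i ∈ Finset.Icc 1 f.natDegree ∧
    ∀ j ∈ Finset.Icc 1 f.natDegree, j ≠ i →
      taylorTermVal v f c g i < taylorTermVal v f c g j

namespace IsDominantTaylorTerm

variable {v : AddValuation K (WithTop Γ)} {f : K[X]} {c : K} {g : Γ} {i : ℕ}
  {A : Type*} [CommRing A] [Algebra K A]

theorem val_aeval_sub (h : IsDominantTaylorTerm v f c g i) (μ : AddValuation A (WithTop Γ))
    (hμ : ∀ x, μ (algebraMap K A x) = v x) {b : A} (hb : μ (b - algebraMap K A c) = g) :
    μ (aeval b f - algebraMap K A (f.eval c)) = taylorTermVal v f c g i := by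
  classical
  have hterm : ∀ j, μ ((hasseDeriv j f).eval c • (b - algebraMap K A c) ^ j) =
      taylorTermVal v f c g j := fun j => by
    rw [Algebra.smul_def, μ.map_mul, hμ, μ.map_pow, hb, taylorTermVal, WithTop.coe_nsmul]
  rw [aeval_sub_algebraMap_eval_eq_sum, μ.map_sum_eq_of_lt h.1, hterm]
  intro j hj
  obtain ⟨hj, hji⟩ := Finset.mem_sdiff.1 hj
  rw [hterm, hterm]
  exact h.2 j hj (by simpa using hji)

theorem val_aeval (h : IsDominantTaylorTerm v f c g i)
    (hlt : v (f.eval c) < taylorTermVal v f c g i) (μ : AddValuation A (WithTop Γ))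
    (hμ : ∀ x, μ (algebraMap K A x) = v x) {b : A}
    (hb : μ (b - algebraMap K A c) = g) : μ (aeval b f) = v (f.eval c) := by
  rw [← hμ (f.eval c)]
  exact μ.map_eq_of_lt_sub (by rwa [h.val_aeval_sub μ hμ hb, hμ])

theorem val_eval_sub (h : IsDominantTaylorTerm v f c g i) {b : K} (hb : v (b - c) = g) :
    v (f.eval b - f.eval c) = taylorTermVal v f c g i := by
  simpa using h.val_aeval_sub v (fun _ => rfl) (b := b) (by simpa using hb)

theorem val_eval (h : IsDominantTaylorTerm v f c g i)
    (hlt : v (f.eval c) < taylorTermVal v f c g i) {b : K} (hb : v (b - c) = g) :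
    v (f.eval b) = v (f.eval c) := by
  simpa using h.val_aeval hlt v (fun _ => rfl) (b := b) (by simpa using hb)

end IsDominantTaylorTerm

end Taylor

section PseudoConvergent

variable {K : Type*} [Field K] {Γ : Type*} [AddCommGroup Γ] [LinearOrder Γ]
  [IsOrderedAddMonoid Γ]
  {ι : Type*} [LinearOrder ι] (v : AddValuation K (WithTop Γ))

def IsPseudoConvergent (a : ι → K) : Prop :=
  ∀ ρ σ τ, ρ < σ → σ < τ → v (a σ - a ρ) < v (a τ - a σ)

def IsGauge (a : ι → K) (γ : ι → Γ) : Prop :=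
  StrictMono γ ∧ ∀ ρ σ, ρ < σ → v (a σ - a ρ) = γ ρ

def IsFixed (a : ι → K) (f : K[X]) : Prop :=
  ∃ c, ∀ᶠ ρ in atTop, v (f.eval (a ρ)) = c

def IsNotFixed (a : ι → K) (f : K[X]) : Prop :=
  EventuallyStrictMono fun ρ => v (f.eval (a ρ))

variable {v} [NoMaxOrder ι] {a : ι → K} {γ : ι → Γ}

theorem IsPseudoConvergent.exists_isGauge (ha : IsPseudoConvergent v a) :
    ∃ γ, IsGauge v a γ := by
  have hsub : ∀ {ρ σ τ}, ρ < σ → σ < τ → v (a τ - a ρ) = v (a σ - a ρ) := by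
    intro ρ σ τ hρσ hστ
    rw [show a τ - a ρ = (a σ - a ρ) + (a τ - a σ) by ring,
      v.map_add_eq_of_lt_left (ha _ _ _ hρσ hστ)]
  have : ∀ ρ, ∃ g : Γ, ∀ σ, ρ < σ → v (a σ - a ρ) = g := by
    intro ρ
    obtain ⟨σ₀, hσ₀⟩ := exists_gt ρ
    obtain ⟨τ, hτ⟩ := exists_gt σ₀
    obtain ⟨g, hg⟩ := WithTop.ne_top_iff_exists.1 (ha ρ σ₀ τ hσ₀ hτ).ne_top
    refine ⟨g, fun σ hσ => ?_⟩
    rcases lt_trichotomy σ σ₀ with h | rfl | h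
    · rw [← hsub hσ h, hg]
    · exact hg.symm
    · rw [hsub hσ₀ h, hg]
  choose γ hγ using this
  refine ⟨γ, fun ρ σ hρσ => ?_, hγ⟩
  obtain ⟨τ, hτ⟩ := exists_gt σ
  simpa only [hγ ρ σ hρσ, hγ σ τ hτ, WithTop.coe_lt_coe] using ha ρ σ τ hρσ hτ

theorem IsGauge.ne_top_of_eventually_val_eval_eq [Nonempty ι] (hγ : IsGauge v a γ) {f : K[X]}
    (hf : f ≠ 0) {c : WithTop Γ} (hc : ∀ᶠ σ in atTop, v (f.eval (a σ)) = c) :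
    c ≠ ⊤ := by
  have ha : Function.Injective a :=
    .of_lt_imp_ne fun ρ σ hρσ heq => by simpa [heq] using hγ.2 ρ σ hρσ
  have hroots : ∀ᶠ σ in atTop, f.eval (a σ) ≠ 0 :=
    ((f.finite_setOfPred_isRoot hf).preimage ha.injOn).eventually_cofinite_notMem.filter_mono
      atTop_le_cofinite
  obtain ⟨σ, hσ, hne⟩ := (hc.and hroots).exists
  rw [← hσ, Ne, v.top_iff]
  exact hne

variable [Nonempty ι]

variable (v) in
theorem eventually_isDominantTaylorTerm (a : ι → K) (hγ : StrictMono γ) {f : K[X]}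
    (hf : 0 < f.natDegree)
    (hhasse : ∀ i ∈ Finset.Icc 1 f.natDegree, IsFixed v a (hasseDeriv i f)) :
    ∃ i, 1 ≤ i ∧ ∃ β ≠ ⊤, ∀ᶠ ρ in atTop,
      IsDominantTaylorTerm v f (a ρ) (γ ρ) i ∧ v ((hasseDeriv i f).eval (a ρ)) = β := by
  choose! β hβ using hhasse
  have hd : f.natDegree ∈ Finset.Icc 1 f.natDegree := Finset.mem_Icc.2 ⟨hf, le_rfl⟩
  have hβd : β f.natDegree ≠ ⊤ := by
    obtain ⟨ρ, hρ⟩ := (hβ _ hd).exists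
    rw [← hρ, hasseDeriv_natDegree_eq_C, eval_C, Ne, v.top_iff, leadingCoeff_eq_zero]
    exact ne_zero_of_natDegree_gt hf
  obtain ⟨i, hi, hβi, hev⟩ := exists_eventually_forall_add_nsmul_lt hγ β hd hβd
  refine ⟨i, (Finset.mem_Icc.1 hi).1, β i, hβi, ?_⟩
  filter_upwards [hev, (eventually_all_finset _).2 hβ] with ρ hlt hval
  refine ⟨⟨hi, fun j hj hji => ?_⟩, hval i hi⟩
  simpa only [taylorTermVal, hval i hi, hval j hj] using hlt j hj hji

theorem exists_isDominantTaylorTerm_val_lt (hγ : IsGauge v a γ) {f : K[X]} (hf : 0 < f.natDegree)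
    (hhasse : ∀ i ∈ Finset.Icc 1 f.natDegree, IsFixed v a (hasseDeriv i f))
    (hns : ¬IsNotFixed v a f) :
    ∃ ρ i, IsDominantTaylorTerm v f (a ρ) (γ ρ) i ∧
      v (f.eval (a ρ)) < taylorTermVal v f (a ρ) (γ ρ) i := by
  obtain ⟨i, hi, β, hβ, hev⟩ := eventually_isDominantTaylorTerm v a hγ.1 hf hhasse
  have hF : StrictMono fun ρ => β + ↑(i • γ ρ) := fun ρ σ hρσ =>
    WithTop.add_lt_add_left hβ <|
      WithTop.coe_lt_coe.2 (nsmul_lt_nsmul_right (by omega) (hγ.1 hρσ))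
  have hterm : ∀ᶠ ρ in atTop, IsDominantTaylorTerm v f (a ρ) (γ ρ) i ∧
      taylorTermVal v f (a ρ) (γ ρ) i = β + ↑(i • γ ρ) :=
    hev.mono fun ρ h => ⟨h.1, by rw [taylorTermVal, h.2]⟩
  have hdiff : ∀ᶠ ρ in atTop, ∀ σ, ρ < σ →
      v (f.eval (a σ) - f.eval (a ρ)) = β + ↑(i • γ ρ) :=
    hterm.mono fun ρ h σ hσ => (h.1.val_eval_sub (hγ.2 ρ σ hσ)).trans h.2
  obtain ⟨ρ, hlt, hdom, hval⟩ :=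
    ((v.frequently_lt_of_not_eventuallyStrictMono hF hdiff hns).and_eventually hterm).exists
  exact ⟨ρ, i, hdom, hval ▸ hlt⟩

theorem isFixed_of_degree_lt (hγ : IsGauge v a γ) {q : K[X]}
    (hqmin : ∀ f : K[X], IsNotFixed v a f → q.degree ≤ f.degree)
    {f : K[X]} (hf : f.degree < q.degree) : IsFixed v a f := by
  induction hn : f.natDegree using Nat.strong_induction_on generalizing f with
  | _ n ih =>
  rcases Nat.eq_zero_or_pos n with rfl | hn0
  · refine ⟨v (f.coeff 0), .of_forall fun σ => ?_⟩
    rw [eq_C_of_natDegree_eq_zero hn, eval_C, coeff_C_zero]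
  subst hn
  obtain ⟨ρ, i, hdom, hlt⟩ := exists_isDominantTaylorTerm_val_lt hγ hn0
    (fun i hi => ih _ (natDegree_hasseDeriv_lt hn0 (Finset.mem_Icc.1 hi).1)
      ((degree_hasseDeriv_lt hn0 (Finset.mem_Icc.1 hi).1).trans hf) rfl)
    (fun h => (hqmin f h).not_gt hf)
  exact ⟨_, (eventually_gt_atTop ρ).mono fun σ hσ => hdom.val_eval hlt (hγ.2 ρ σ hσ)⟩

theorem exists_isDominantTaylorTerm_of_degree_lt (hγ : IsGauge v a γ) {q : K[X]}
    (hqmin : ∀ f : K[X], IsNotFixed v a f → q.degree ≤ f.degree)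
    {f : K[X]} (hf0 : 0 < f.natDegree) (hf : f.degree < q.degree) :
    ∃ ρ i, IsDominantTaylorTerm v f (a ρ) (γ ρ) i ∧
      v (f.eval (a ρ)) < taylorTermVal v f (a ρ) (γ ρ) i :=
  exists_isDominantTaylorTerm_val_lt hγ hf0
    (fun _ hi => isFixed_of_degree_lt hγ hqmin
      ((degree_hasseDeriv_lt hf0 (Finset.mem_Icc.1 hi).1).trans hf))
    (fun h => (hqmin f h).not_gt hf)

theorem IsGauge.eventually_val_aeval_eq (hγ : IsGauge v a γ) {q : K[X]}
    (hqmin : ∀ f : K[X], IsNotFixed v a f → q.degree ≤ f.degree)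
    {A : Type*} [CommRing A] [Algebra K A] (μ : AddValuation A (WithTop Γ))
    (hμ : ∀ x, μ (algebraMap K A x) = v x) {b : A}
    (hb : ∀ ρ, μ (b - algebraMap K A (a ρ)) = γ ρ) {f : K[X]} (hf : f.degree < q.degree) :
    ∀ᶠ σ in atTop, μ (aeval b f) = v (f.eval (a σ)) := by
  rcases Nat.eq_zero_or_pos f.natDegree with h0 | hf0
  · rw [eq_C_of_natDegree_eq_zero h0]
    exact .of_forall fun σ => by rw [aeval_C, eval_C, hμ]
  obtain ⟨ρ, i, hdom, hlt⟩ := exists_isDominantTaylorTerm_of_degree_lt hγ hqmin hf0 hf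
  exact (eventually_gt_atTop ρ).mono fun σ hσ =>
    (hdom.val_aeval hlt μ hμ (hb ρ)).trans (hdom.val_eval hlt (hγ.2 ρ σ hσ)).symm

end PseudoConvergent

theorem irreducible_of_forall_degree_lt_isFixed {K : Type*} [Field K] {Γ : Type*} [AddCommGroup Γ]
    [LinearOrder Γ] [IsOrderedAddMonoid Γ] {ι : Type*} [LinearOrder ι] [NoMaxOrder ι]
    (v : AddValuation K (WithTop Γ)) {a : ι → K} {q : K[X]}
    (hq : IsNotFixed v a q)
    (hconst : ∀ f : K[X], f.degree < q.degree → IsFixed v a f) :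
    Irreducible q := by
  have hC : ∀ c : K, q ≠ C c := fun c hqc =>
    hq.not_eventually_eq (v c) (.of_forall fun σ => by rw [hqc, eval_C])
  have hq0 : q ≠ 0 := by simpa using hC 0
  refine ⟨fun hu => ?_, fun f f' hqf => ?_⟩
  · obtain ⟨c, -, hc⟩ := Polynomial.isUnit_iff.1 hu
    exact hC c hc.symm
  by_contra hnu
  rw [not_or] at hnu
  have hf0 : f ≠ 0 := left_ne_zero_of_mul (hqf ▸ hq0)
  have hf'0 : f' ≠ 0 := right_ne_zero_of_mul (hqf ▸ hq0)
  have hpos := natDegree_pos_iff_degree_pos.2 (degree_pos_of_ne_zero_of_nonunit hf0 hnu.1)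
  have hpos' := natDegree_pos_iff_degree_pos.2 (degree_pos_of_ne_zero_of_nonunit hf'0 hnu.2)
  have hdeg : q.natDegree = f.natDegree + f'.natDegree := by rw [hqf, natDegree_mul hf0 hf'0]
  obtain ⟨c, hc⟩ := hconst f (degree_lt_degree (by omega))
  obtain ⟨c', hc'⟩ := hconst f' (degree_lt_degree (by omega))
  exact hq.not_eventually_eq (c + c')
    ((hc.and hc').mono fun σ h => by rw [hqf, eval_mul, v.map_mul, h.1, h.2])

section Extension

variable {K : Type*} [Field K] {Γ : Type*} [AddCommGroup Γ] [LinearOrder Γ]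
  [IsOrderedAddMonoid Γ] {ι : Type*} [LinearOrder ι] {E : Type*} [CommRing E] [Algebra K E]

def IsKaplanskyExtension (v : AddValuation K (WithTop Γ)) (a : ι → K) (q : K[X]) (g : E)
    (w : E → WithTop Γ) : Prop :=
  ∀ f : K[X], f.degree < q.degree → ∀ᶠ σ in atTop, v (f.eval (a σ)) = w (aeval g f)

variable {v : AddValuation K (WithTop Γ)} {a : ι → K} {q : K[X]} {g : E} {w : E → WithTop Γ}

variable (v a) in
theorem exists_isKaplanskyExtension
    (hgen : ∀ y : E, ∃ f : K[X], f.degree < q.degree ∧ aeval g f = y)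
    (hinj : ∀ f : K[X], f.degree < q.degree → aeval g f = 0 → f = 0)
    (hconst : ∀ f : K[X], f.degree < q.degree → IsFixed v a f) :
    ∃ w, IsKaplanskyExtension v a q g w := by
  have : ∀ y : E, ∃ c, ∀ f : K[X], f.degree < q.degree → aeval g f = y →
      ∀ᶠ σ in atTop, v (f.eval (a σ)) = c := by
    intro y
    obtain ⟨f₀, hf₀, rfl⟩ := hgen y
    obtain ⟨c, hc⟩ := hconst f₀ hf₀
    refine ⟨c, fun f hf hff₀ => ?_⟩
    rwa [sub_eq_zero.1 (hinj (f - f₀) ((degree_sub_le f f₀).trans_lt (max_lt hf hf₀))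
      (by rw [map_sub, hff₀, sub_self]))]
  choose w hw using this
  exact ⟨w, fun f hf => hw _ f hf rfl⟩

namespace IsKaplanskyExtension

variable [Nonempty ι]

theorem map_algebraMap (hw : IsKaplanskyExtension v a q g w) (hq : 0 < q.degree) (c : K) :
    w (algebraMap K E c) = v c := by
  obtain ⟨σ, hσ⟩ := (hw (C c) (degree_C_le.trans_lt hq)).exists
  rw [← aeval_C, ← hσ, eval_C]

theorem map_add (hw : IsKaplanskyExtension v a q g w)
    (hgen : ∀ y : E, ∃ f : K[X], f.degree < q.degree ∧ aeval g f = y) (y y' : E) :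
    min (w y) (w y') ≤ w (y + y') := by
  obtain ⟨f, hf, rfl⟩ := hgen y
  obtain ⟨f', hf', rfl⟩ := hgen y'
  have hsum := (degree_add_le f f').trans_lt (max_lt hf hf')
  obtain ⟨σ, h, h', hs⟩ := ((hw f hf).and ((hw f' hf').and (hw _ hsum))).exists
  rw [← _root_.map_add, ← h, ← h', ← hs, eval_add]
  exact v.map_add _ _

variable [NoMaxOrder ι] {γ : ι → Γ}

theorem eq_top_iff (hw : IsKaplanskyExtension v a q g w)
    (hgen : ∀ y : E, ∃ f : K[X], f.degree < q.degree ∧ aeval g f = y)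
    (hinj : ∀ f : K[X], f.degree < q.degree → aeval g f = 0 → f = 0) (hγ : IsGauge v a γ)
    (y : E) : w y = ⊤ ↔ y = 0 := by
  obtain ⟨f, hf, rfl⟩ := hgen y
  refine ⟨fun htop => by_contra fun hy => ?_, fun hy => ?_⟩
  · exact hγ.ne_top_of_eventually_val_eval_eq (fun h0 => hy (by rw [h0, _root_.map_zero]))
      (hw f hf) htop
  · obtain ⟨σ, hσ⟩ := (hw f hf).exists
    rw [← hσ, hinj f hf hy, eval_zero, v.map_zero]

theorem map_mul (hw : IsKaplanskyExtension v a q g w)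
    (hgen : ∀ y : E, ∃ f : K[X], f.degree < q.degree ∧ aeval g f = y) (hγ : IsGauge v a γ)
    (hroot : aeval g q = 0) (hq : IsNotFixed v a q) (y y' : E) :
    w (y * y') = w y + w y' := by
  obtain ⟨f, hf, rfl⟩ := hgen y
  obtain ⟨f', hf', rfl⟩ := hgen y'
  set r := f * f' % q
  set t := f * f' / q
  have hr : r.degree < q.degree := degree_mod_lt _ (ne_zero_of_degree_gt hf)
  have hrt : f * f' - r = q * t := by rw [sub_eq_iff_eq_add', EuclideanDomain.mod_add_div]
  have hprod : ∀ᶠ σ in atTop, v ((f * f').eval (a σ)) = w (aeval g f) + w (aeval g f') :=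
    ((hw f hf).and (hw f' hf')).mono fun σ h => by rw [eval_mul, v.map_mul, h.1, h.2]
  rw [← _root_.map_mul, show aeval g (f * f') = aeval g r by
    rw [← sub_eq_zero, ← map_sub, hrt, _root_.map_mul, hroot, zero_mul]]
  rcases eq_or_ne t 0 with ht | ht
  · rw [ht, mul_zero, sub_eq_zero] at hrt
    obtain ⟨σ, h, hr⟩ := (hprod.and (hw r hr)).exists
    rw [← hr, ← h, hrt]
  have ht' : t.degree < q.degree := degree_mul_div_lt hf hf'
  have hqt : (fun σ => v ((f * f').eval (a σ) - r.eval (a σ))) =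
      fun σ => v (q.eval (a σ)) + v (t.eval (a σ)) :=
    funext fun σ => by rw [← eval_sub, hrt, eval_mul, v.map_mul]
  have hmono : EventuallyStrictMono fun σ => v ((f * f').eval (a σ) - r.eval (a σ)) :=
    hqt ▸ hq.add_eventually_eq (hγ.ne_top_of_eventually_val_eval_eq ht (hw t ht')) (hw t ht')
  exact (v.eq_of_eventuallyStrictMono_sub hprod (hw r hr) hmono).symm

theorem isVal (hw : IsKaplanskyExtension v a q g w)
    (hgen : ∀ y : E, ∃ f : K[X], f.degree < q.degree ∧ aeval g f = y) (hγ : IsGauge v a γ)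
    (hroot : aeval g q = 0) (hq : IsNotFixed v a q)
    (hqdeg : 0 < q.degree) : IsVal w :=
  ⟨hw.map_mul hgen hγ hroot hq, hw.map_add hgen, by simpa using hw.map_algebraMap hqdeg 1,
    by simpa using hw.map_algebraMap hqdeg 0⟩

theorem exists_lt_map_sub_algebraMap (hw : IsKaplanskyExtension v a q g w)
    (hgen : ∀ y : E, ∃ f : K[X], f.degree < q.degree ∧ aeval g f = y)
    (hinj : ∀ f : K[X], f.degree < q.degree → aeval g f = 0 → f = 0) (hγ : IsGauge v a γ)
    (hqmin : ∀ f : K[X], IsNotFixed v a f → q.degree ≤ f.degree)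
    {y : E} (hy : y ≠ 0) : ∃ c : K, w y < w (y - algebraMap K E c) := by
  obtain ⟨f, hf, rfl⟩ := hgen y
  rcases Nat.eq_zero_or_pos f.natDegree with h0 | hf0
  · refine ⟨f.coeff 0, ?_⟩
    have hc : aeval g f = algebraMap K E (f.coeff 0) := by
      rw [← aeval_C g, ← eq_C_of_natDegree_eq_zero h0]
    rw [← hc, sub_self, (hw.eq_top_iff hgen hinj hγ 0).2 rfl, lt_top_iff_ne_top, Ne,
      hw.eq_top_iff hgen hinj hγ]
    exact hy
  obtain ⟨ρ, i, hdom, hlt⟩ := exists_isDominantTaylorTerm_of_degree_lt hγ hqmin hf0 hf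
  refine ⟨f.eval (a ρ), ?_⟩
  have hq : 0 < q.degree := (zero_le_degree_iff.2 (ne_zero_of_natDegree_gt hf0)).trans_lt hf
  have hsub : (f - C (f.eval (a ρ))).degree < q.degree :=
    (degree_sub_le _ _).trans_lt (max_lt hf (degree_C_le.trans_lt hq))
  obtain ⟨σ, hσ, h, h'⟩ := ((eventually_gt_atTop ρ).and ((hw f hf).and (hw _ hsub))).exists
  rw [← aeval_C g, ← map_sub, ← h, ← h', eval_sub, eval_C, hdom.val_eval_sub (hγ.2 ρ σ hσ),
    hdom.val_eval hlt (hγ.2 ρ σ hσ)]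
  exact hlt

theorem map_aeval_eq (hw : IsKaplanskyExtension v a q g w) (hγ : IsGauge v a γ)
    (hqmin : ∀ f : K[X], IsNotFixed v a f → q.degree ≤ f.degree)
    (hq0 : q ≠ 0) (hroot : aeval g q = 0) {A : Type*} [CommRing A] [Algebra K A]
    (μ : AddValuation A (WithTop Γ)) (hμ : ∀ x, μ (algebraMap K A x) = v x) {b : A}
    (hbq : aeval b q = 0) (hb : ∀ ρ, μ (b - algebraMap K A (a ρ)) = γ ρ) (f : K[X]) :
    μ (aeval b f) = w (aeval g f) := by
  have hr := degree_mod_lt f hq0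
  obtain ⟨σ, h, h'⟩ := ((hγ.eventually_val_aeval_eq hqmin μ hμ hb hr).and (hw _ hr)).exists
  rw [← aeval_mod_of_aeval_eq_zero hbq, ← aeval_mod_of_aeval_eq_zero hroot, h, h']

end IsKaplanskyExtension

end Extension

namespace IntermediateField

variable {K L : Type*} [Field K] [Field L] [Algebra K L] {z : L}

theorem exists_degree_lt_aeval_gen_eq (hz : IsIntegral K z) (y : K⟮z⟯) :
    ∃ f : K[X], f.degree < (minpoly K z).degree ∧ aeval (AdjoinSimple.gen K z) f = y := by
  obtain ⟨f, hf, rfl⟩ := (adjoin.powerBasis hz).exists_eq_aeval y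
  rw [adjoin.powerBasis_dim] at hf
  exact ⟨f, degree_lt_degree hf, by rw [adjoin.powerBasis_gen]⟩

theorem eq_zero_of_degree_lt_of_aeval_gen_eq_zero {f : K[X]} (hf : f.degree < (minpoly K z).degree)
    (h : aeval (AdjoinSimple.gen K z) f = 0) : f = 0 := by
  by_contra hf0
  exact (minpoly.degree_le_of_ne_zero K _ hf0 h).not_gt (by rwa [minpoly_gen])

end IntermediateField

open IntermediateField in
theorem kaplansky_algebraic_type_general {K : Type*} [Field K]
    {Γ : Type*} [AddCommGroup Γ] [LinearOrder Γ] [IsOrderedAddMonoid Γ]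
    {ι : Type*} [LinearOrder ι] [NoMaxOrder ι] [Nonempty ι]
    (v : K → WithTop Γ) (hv : IsVal v)
    (a : ι → K)
    (hpcs : ∀ ρ σ τ : ι, ρ < σ → σ < τ → v (a σ - a ρ) < v (a τ - a σ))
    (q : K[X])
    (hq : ∃ ρ0 : ι, ∀ ρ σ : ι, ρ0 ≤ ρ → ρ < σ → v (q.eval (a ρ)) < v (q.eval (a σ)))
    (hqmin : ∀ f : K[X],
      (∃ ρ0 : ι, ∀ ρ σ : ι, ρ0 ≤ ρ → ρ < σ → v (f.eval (a ρ)) < v (f.eval (a σ))) →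
      q.degree ≤ f.degree)
    (z : AlgebraicClosure K) (hz : Polynomial.aeval z q = 0) :
    ∃ w : K⟮z⟯ → WithTop Γ,
      IsVal w ∧
      (∀ y : K⟮z⟯, w y = ⊤ ↔ y = 0) ∧
      (∀ c : K, w (algebraMap K K⟮z⟯ c) = v c) ∧
      (∀ f : K[X], f.degree < q.degree →
        ∃ ρf : ι, ∀ σ : ι, ρf ≤ σ →
          w (Polynomial.aeval (AdjoinSimple.gen K z) f) = v (f.eval (a σ))) ∧
      (∀ y : K⟮z⟯, y ≠ 0 → ∃ c : K, w y < w (y - algebraMap K K⟮z⟯ c)) ∧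
      (∀ (L : Type*) [Field L] [Algebra K L] (μ : L → WithTop Γ),
        IsVal μ → (∀ y : L, μ y = ⊤ ↔ y = 0) →
        (∀ c : K, μ (algebraMap K L c) = v c) →
        ∀ u : L, Polynomial.aeval u q = 0 →
          (∀ ρ σ : ι, ρ < σ → μ (u - algebraMap K L (a ρ)) = v (a σ - a ρ)) →
          ∀ f : K[X], μ (Polynomial.aeval u f) =
            w (Polynomial.aeval (AdjoinSimple.gen K z) f)) := by
  obtain ⟨γ, hγ⟩ := IsPseudoConvergent.exists_isGauge (v := hv.toAddValuation) hpcs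
  have hconst := fun (f : K[X]) (hf : f.degree < q.degree) => isFixed_of_degree_lt hγ hqmin hf
  have hirr : Irreducible q := irreducible_of_forall_degree_lt_isFixed hv.toAddValuation hq hconst
  have hdeg : (minpoly K z).degree = q.degree := by
    rw [← minpoly.eq_of_irreducible hirr hz, degree_mul,
      degree_C (inv_ne_zero (leadingCoeff_ne_zero.2 hirr.ne_zero)), add_zero]
  have hzi : IsIntegral K z := IsAlgebraic.isIntegral ⟨q, hirr.ne_zero, hz⟩
  have hgen := fun y => hdeg ▸ exists_degree_lt_aeval_gen_eq hzi y
  have hinj := fun (f : K[X]) (hf : f.degree < q.degree) =>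
    eq_zero_of_degree_lt_of_aeval_gen_eq_zero (hdeg ▸ hf)
  have hroot : aeval (AdjoinSimple.gen K z) q = 0 :=
    aeval_eq_zero_of_dvd_aeval_eq_zero (minpoly.dvd K z hz) (aeval_gen_minpoly K z)
  obtain ⟨w, hw⟩ := exists_isKaplanskyExtension hv.toAddValuation a hgen hinj hconst
  refine ⟨w, hw.isVal hgen hγ hroot hq (degree_pos_of_irreducible hirr),
    hw.eq_top_iff hgen hinj hγ, hw.map_algebraMap (degree_pos_of_irreducible hirr),
    fun f hf => ?_, fun y hy => hw.exists_lt_map_sub_algebraMap hgen hinj hγ hqmin hy,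
    fun L _ _ μ hμ _ hμv u hu hulim f => ?_⟩
  · obtain ⟨ρ, hρ⟩ := eventually_atTop.1 (hw f hf)
    exact ⟨ρ, fun σ hσ => (hρ σ hσ).symm⟩
  · refine hw.map_aeval_eq hγ hqmin hirr.ne_zero hroot hμ.toAddValuation hμv hu (fun ρ => ?_) f
    obtain ⟨σ, hσ⟩ := exists_gt ρ
    exact (hulim ρ σ hσ).trans (hγ.2 ρ σ hσ)

open IntermediateField in
/-- **Theorem 3 of [Kap]**: let `{a_ρ}_{ρ<λ}` be a pseudo-convergent sequence of
algebraic type in `(K,ν)` without a limit in `K`, let `q` be a polynomial of smallest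
degree whose values `ν(q(a_ρ))` are eventually strictly increasing, and let `z` be a
root of `q` (in an algebraic closure of `K`). Then there is an immediate algebraic
extension of `ν` to `K(z)` such that for all `f` with `deg f < deg q`, `ν(f(z))` is the
eventually constant value `ν(f(a_ρ))`; moreover for every root `u` of `q` in a valued
extension `(K(u), μ)` of `(K,ν)` making `u` a limit of `{a_ρ}`, the `K`-map sending `u`
to `z` is value-preserving (so it induces a value-preserving `K`-isomorphism from
`K(u)` onto `K(z)`). -/
theorem kaplansky_algebraic_type {K : Type*} [Field K]
    {Γ : Type*} [AddCommGroup Γ] [LinearOrder Γ] [IsOrderedAddMonoid Γ]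
    {ι : Type*} [LinearOrder ι] [WellFoundedLT ι] [NoMaxOrder ι] [Nonempty ι]
    (v : K → WithTop Γ) (hv : IsVal v) (hvf : ∀ c : K, v c = ⊤ ↔ c = 0)
    (a : ι → K)
    (hpcs : ∀ ρ σ τ : ι, ρ < σ → σ < τ → v (a σ - a ρ) < v (a τ - a σ))
    (halg : ¬ ∀ f : K[X], ∃ ρf : ι, ∀ σ : ι, ρf ≤ σ →
      v (f.eval (a σ)) = v (f.eval (a ρf)))
    (hnolim : ¬∃ z : K, ∀ ρ σ : ι, ρ < σ → v (z - a ρ) = v (a σ - a ρ))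
    (q : K[X])
    (hq : ∃ ρ0 : ι, ∀ ρ σ : ι, ρ0 ≤ ρ → ρ < σ → v (q.eval (a ρ)) < v (q.eval (a σ)))
    (hqmin : ∀ f : K[X],
      (∃ ρ0 : ι, ∀ ρ σ : ι, ρ0 ≤ ρ → ρ < σ → v (f.eval (a ρ)) < v (f.eval (a σ))) →
      q.degree ≤ f.degree)
    (z : AlgebraicClosure K) (hz : Polynomial.aeval z q = 0) :
    ∃ w : K⟮z⟯ → WithTop Γ,
      IsVal w ∧
      (∀ y : K⟮z⟯, w y = ⊤ ↔ y = 0) ∧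
      (∀ c : K, w (algebraMap K K⟮z⟯ c) = v c) ∧
      (∀ f : K[X], f.degree < q.degree →
        ∃ ρf : ι, ∀ σ : ι, ρf ≤ σ →
          w (Polynomial.aeval (AdjoinSimple.gen K z) f) = v (f.eval (a σ))) ∧
      (∀ y : K⟮z⟯, y ≠ 0 → ∃ c : K, w y < w (y - algebraMap K K⟮z⟯ c)) ∧
      (∀ (L : Type*) [Field L] [Algebra K L] (μ : L → WithTop Γ),
        IsVal μ → (∀ y : L, μ y = ⊤ ↔ y = 0) →
        (∀ c : K, μ (algebraMap K L c) = v c) →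
        ∀ u : L, Polynomial.aeval u q = 0 →
          (∀ ρ σ : ι, ρ < σ → μ (u - algebraMap K L (a ρ)) = v (a σ - a ρ)) →
          ∀ f : K[X], μ (Polynomial.aeval u f) =
            w (Polynomial.aeval (AdjoinSimple.gen K z) f)) :=
  kaplansky_algebraic_type_general v hv a hpcs q hq hqmin z hz
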